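/- For large n, the optimal integer fractional covering ratio of the n×n grid satisfies 7 − ε ≤ ifcov(G_{n×n}) ≤ 213/25. -/

import Mathlib

/-- The `r × c` grid graph. -/
def fgrid (r c : ℕ) : SimpleGraph (Fin r × Fin c) where
  Adj p q := ((p.1 : ℤ) - q.1).natAbs + ((p.2 : ℤ) - q.2).natAbs = 1
  symm := ⟨by intro p q h; omega⟩
  loopless := ⟨by intro p h; simp at h⟩

/-- An integer distribution fractionally covers the `n × n` grid if every vertex has
weight at least 1. -/
def FracCovers (n : ℕ) (D : Fin n × Fin n → ℕ) : Prop :=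
  ∀ u, 1 ≤ ∑ v, (D v : ℝ) * (1 / 2) ^ ((fgrid n n).dist u v)

/-- The optimal integer fractional covering ratio of the `n × n` grid. -/
noncomputable def ifcov (n : ℕ) : ℝ :=
  sSup {r : ℝ | ∃ D : Fin n × Fin n → ℕ, FracCovers n D ∧
    r = (n : ℝ) ^ 2 / (∑ v, (D v : ℝ))}

/-!
Lower bound: single pebbles on the lattice `x + 2y ≡ 0 (mod 7)` give weight at least `1` to
every vertex at distance at least `5` from the boundary (a finite check over the `11 × 11` box
of offsets, one case per residue of `x + 2y`), and pebbling the boundary strip of width `5` as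
well costs only `O(n)` further pebbles.

Upper bound: the grid distance is the `ℓ¹` distance, so a pebble sends out total weight
`∑ᵤ 2^{-d(u,v)}`, a product of two sums along lines, hence at most `9` (at most `6` on the
boundary). Averaging the covering condition over the four diagonal neighbours of an interior
vertex holding `k` pebbles shows that its weight is at least `1 + 12k/25`, and double counting
the total weight gives `n² ≤ (9 - 12/25) |D|`.
-/

namespace GridCover

open scoped Finset

variable {n : ℕ}

def l1Dist (u v : Fin n × Fin n) : ℕ :=
  ((u.1 : ℤ) - v.1).natAbs + ((u.2 : ℤ) - v.2).natAbs

lemma exists_walk_length_eq_l1Dist (u v : Fin n × Fin n) :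
    ∃ p : (fgrid n n).Walk u v, p.length = l1Dist u v := by
  induction hk : l1Dist u v generalizing u with
  | zero =>
    obtain rfl : u = v := by
      unfold l1Dist at hk
      ext <;> omega
    exact ⟨.nil, rfl⟩
  | succ k ih =>
    obtain ⟨w, hadj, hw⟩ : ∃ w, (fgrid n n).Adj u w ∧ l1Dist w v = k := by
      unfold l1Dist at hk ⊢
      simp only [fgrid]
      rcases lt_trichotomy (u.1 : ℕ) v.1 with h | h | h
      · exact ⟨(⟨u.1 + 1, by omega⟩, u.2), by simp; omega⟩
      rcases lt_trichotomy (u.2 : ℕ) v.2 with h' | h' | h'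
      · exact ⟨(u.1, ⟨u.2 + 1, by omega⟩), by simp; omega⟩
      · omega
      · exact ⟨(u.1, ⟨u.2 - 1, by omega⟩), by simp; omega⟩
      · exact ⟨(⟨u.1 - 1, by omega⟩, u.2), by simp; omega⟩
    obtain ⟨p, hp⟩ := ih w hw
    exact ⟨.cons hadj p, by simp [hp]⟩

lemma l1Dist_le_length {u v : Fin n × Fin n} (p : (fgrid n n).Walk u v) :
    l1Dist u v ≤ p.length := by
  induction p with
  | nil => simp [l1Dist]
  | cons hadj _ ih =>
    rw [SimpleGraph.Walk.length_cons]
    simp only [fgrid] at hadj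
    simp only [l1Dist] at ih ⊢
    omega

lemma fgrid_dist (u v : Fin n × Fin n) : (fgrid n n).dist u v = l1Dist u v := by
  obtain ⟨p, hp⟩ := exists_walk_length_eq_l1Dist u v
  obtain ⟨q, hq⟩ := SimpleGraph.Reachable.exists_walk_length_eq_dist ⟨p⟩
  exact le_antisymm (hp ▸ SimpleGraph.dist_le p) (hq ▸ l1Dist_le_length q)

noncomputable def weight (D : Fin n × Fin n → ℕ) (u : Fin n × Fin n) : ℝ :=
  ∑ v, (D v : ℝ) * (1 / 2) ^ l1Dist u v

lemma fracCovers_iff (D : Fin n × Fin n → ℕ) : FracCovers n D ↔ ∀ u, 1 ≤ weight D u := by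
  simp only [FracCovers, weight, fgrid_dist]

lemma sum_half_pow_le_two {α : Type*} {s : Finset α} {f : α → ℕ} (hf : Set.InjOn f s) :
    ∑ x ∈ s, (1 / 2 : ℝ) ^ f x ≤ 2 := by
  classical
  rw [← Finset.sum_image hf]
  exact (summable_geometric_two.sum_le_tsum _ fun _ _ ↦ by positivity).trans
    tsum_geometric_two.le

lemma sum_half_pow_natAbs_sub_le_three {α : Type*} {s : Finset α} {f : α → ℤ}
    (hf : Set.InjOn f s) (t : ℤ) : ∑ x ∈ s, (1 / 2 : ℝ) ^ (f x - t).natAbs ≤ 3 := by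
  classical
  rw [← Finset.sum_filter_add_sum_filter_not s (fun x ↦ f x ≤ t)]
  have hle : ∑ x ∈ s with f x ≤ t, (1 / 2 : ℝ) ^ (f x - t).natAbs ≤ 2 :=
    sum_half_pow_le_two fun x hx y hy hxy ↦ by
      rw [Finset.mem_coe, Finset.mem_filter] at hx hy
      exact hf hx.1 hy.1 (by omega)
  have hgt : ∑ x ∈ s with ¬f x ≤ t, (1 / 2 : ℝ) ^ (f x - t).natAbs ≤ 1 := by
    have hsplit : ∀ x ∈ s.filter (fun x ↦ ¬f x ≤ t),
        (1 / 2 : ℝ) ^ (f x - t).natAbs = 1 / 2 * (1 / 2) ^ ((f x - t).natAbs - 1) := by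
      intro x hx
      rw [← pow_succ']
      congr 1
      simp only [Finset.mem_filter] at hx
      omega
    rw [Finset.sum_congr rfl hsplit, ← Finset.mul_sum]
    have hgeom := sum_half_pow_le_two (s := s.filter (fun x ↦ ¬f x ≤ t))
      (f := fun x ↦ (f x - t).natAbs - 1) fun x hx y hy hxy ↦ by
        rw [Finset.mem_coe, Finset.mem_filter] at hx hy
        exact hf hx.1 hy.1 (by simp only at hxy; omega)
    linarith
  linarith

def IsInner (k : ℕ) (v : Fin n × Fin n) : Prop :=
  k ≤ v.1.val ∧ v.1.val + k < n ∧ k ≤ v.2.val ∧ v.2.val + k < n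

instance (k : ℕ) (v : Fin n × Fin n) : Decidable (IsInner k v) := by
  unfold IsInner; infer_instance

lemma sum_half_pow_l1Dist_eq_mul (v : Fin n × Fin n) :
    ∑ u, (1 / 2 : ℝ) ^ l1Dist u v =
      (∑ x : Fin n, (1 / 2 : ℝ) ^ ((x : ℤ) - v.1).natAbs) *
        ∑ y : Fin n, (1 / 2 : ℝ) ^ ((y : ℤ) - v.2).natAbs := by
  simp only [Finset.sum_mul_sum, Fintype.sum_prod_type, l1Dist, pow_add]

/-- Each of the two factors of `sum_half_pow_l1Dist_eq_mul` is at most `3`, and at most `2`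
when the pebble is at an end of the line, where the distances along it are injective. -/
lemma sum_half_pow_l1Dist_le (v : Fin n × Fin n) :
    ∑ u, (1 / 2 : ℝ) ^ l1Dist u v ≤ if IsInner 1 v then 9 else 6 := by
  have hinj : Set.InjOn (fun x : Fin n ↦ (x : ℤ)) ↑(Finset.univ : Finset (Fin n)) :=
    (Nat.cast_injective.comp Fin.val_injective).injOn
  rw [sum_half_pow_l1Dist_eq_mul]
  set X := ∑ x : Fin n, (1 / 2 : ℝ) ^ ((x : ℤ) - v.1).natAbs
  set Y := ∑ y : Fin n, (1 / 2 : ℝ) ^ ((y : ℤ) - v.2).natAbs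
  have hX : X ≤ 3 := sum_half_pow_natAbs_sub_le_three hinj _
  have hY : Y ≤ 3 := sum_half_pow_natAbs_sub_le_three hinj _
  have hX0 : 0 ≤ X := Finset.sum_nonneg fun _ _ ↦ by positivity
  have hY0 : 0 ≤ Y := Finset.sum_nonneg fun _ _ ↦ by positivity
  split_ifs with hv
  · nlinarith
  have hend : ∀ t : Fin n, (t : ℕ) = 0 ∨ (t : ℕ) + 1 = n →
      ∑ x : Fin n, (1 / 2 : ℝ) ^ ((x : ℤ) - t).natAbs ≤ 2 := fun t ht ↦
    sum_half_pow_le_two fun x _ y _ hxy ↦ by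
      have := x.isLt; have := y.isLt
      exact Fin.ext (by omega)
  have hXY : X ≤ 2 ∨ Y ≤ 2 := by
    simp only [IsInner, not_and_or, not_le, not_lt] at hv
    rcases hv with h | h | h | h
    exacts [.inl (hend v.1 (by omega)), .inl (hend v.1 (by omega)),
      .inr (hend v.2 (by omega)), .inr (hend v.2 (by omega))]
  rcases hXY with h | h <;> nlinarith

lemma half_pow_natAbs_sub_one_add_le (a : ℤ) :
    (1 / 2 : ℝ) ^ (a - 1).natAbs + (1 / 2) ^ (a + 1).natAbs ≤ 5 / 2 * (1 / 2) ^ a.natAbs := by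
  rcases lt_trichotomy a 0 with h | rfl | h
  · obtain ⟨m, hm⟩ : ∃ m, a.natAbs = m + 1 := ⟨a.natAbs - 1, by omega⟩
    rw [show (a - 1).natAbs = m + 2 by omega, show (a + 1).natAbs = m by omega, hm]
    exact le_of_eq (by ring)
  · norm_num
  · obtain ⟨m, hm⟩ : ∃ m, a.natAbs = m + 1 := ⟨a.natAbs - 1, by omega⟩
    rw [show (a - 1).natAbs = m by omega, show (a + 1).natAbs = m + 2 by omega, hm]
    exact le_of_eq (by ring)

lemma diagonal_sum_le (a b : ℤ) :
    (1 / 2 : ℝ) ^ ((a - 1).natAbs + (b - 1).natAbs) + (1 / 2) ^ ((a - 1).natAbs + (b + 1).natAbs)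
      + (1 / 2) ^ ((a + 1).natAbs + (b - 1).natAbs) + (1 / 2) ^ ((a + 1).natAbs + (b + 1).natAbs)
      ≤ 25 / 4 * (1 / 2) ^ (a.natAbs + b.natAbs) := by
  calc _ = ((1 / 2 : ℝ) ^ (a - 1).natAbs + (1 / 2) ^ (a + 1).natAbs)
        * ((1 / 2) ^ (b - 1).natAbs + (1 / 2) ^ (b + 1).natAbs) := by ring
    _ ≤ (5 / 2 * (1 / 2) ^ a.natAbs) * (5 / 2 * (1 / 2) ^ b.natAbs) :=
      mul_le_mul (half_pow_natAbs_sub_one_add_le a) (half_pow_natAbs_sub_one_add_le b)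
        (by positivity) (by positivity)
    _ = _ := by ring

/-- The four diagonal neighbours of `u` lie at distance `2` from `u`, but see every vertex with
at most `25/4` times the weight `u` sees it. -/
lemma sum_diagonal_half_pow_l1Dist_le {u : Fin n × Fin n} {xm xp ym yp : Fin n}
    (hxm : (xm : ℕ) + 1 = u.1) (hxp : (xp : ℕ) = u.1 + 1)
    (hym : (ym : ℕ) + 1 = u.2) (hyp : (yp : ℕ) = u.2 + 1) (v : Fin n × Fin n) :
    (1 / 2 : ℝ) ^ l1Dist (xm, ym) v + (1 / 2) ^ l1Dist (xm, yp) v + (1 / 2) ^ l1Dist (xp, ym) v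
      + (1 / 2) ^ l1Dist (xp, yp) v + (if v = u then 21 / 4 else 0)
      ≤ 25 / 4 * (1 / 2) ^ l1Dist u v := by
  simp only [l1Dist]
  split_ifs with hvu
  · subst hvu
    rw [show ((xm : ℤ) - v.1).natAbs = 1 by omega, show ((xp : ℤ) - v.1).natAbs = 1 by omega,
      show ((ym : ℤ) - v.2).natAbs = 1 by omega, show ((yp : ℤ) - v.2).natAbs = 1 by omega]
    norm_num
  · rw [show ((xm : ℤ) - v.1).natAbs = ((v.1 : ℤ) - u.1 + 1).natAbs by omega,
      show ((xp : ℤ) - v.1).natAbs = ((v.1 : ℤ) - u.1 - 1).natAbs by omega,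
      show ((ym : ℤ) - v.2).natAbs = ((v.2 : ℤ) - u.2 + 1).natAbs by omega,
      show ((yp : ℤ) - v.2).natAbs = ((v.2 : ℤ) - u.2 - 1).natAbs by omega,
      show ((u.1 : ℤ) - v.1).natAbs = ((v.1 : ℤ) - u.1).natAbs by omega,
      show ((u.2 : ℤ) - v.2).natAbs = ((v.2 : ℤ) - u.2).natAbs by omega]
    linarith [diagonal_sum_le ((v.1 : ℤ) - u.1) ((v.2 : ℤ) - u.2)]

lemma weight_excess (D : Fin n × Fin n → ℕ) (hD : ∀ w, 1 ≤ weight D w) {u : Fin n × Fin n}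
    (hu : IsInner 1 u) : 16 / 25 + 21 / 25 * (D u : ℝ) ≤ weight D u := by
  obtain ⟨hx₁, hx₂, hy₁, hy₂⟩ := hu
  obtain ⟨xm, hxm⟩ : ∃ x : Fin n, (x : ℕ) + 1 = u.1 :=
    ⟨⟨u.1 - 1, by omega⟩, Nat.sub_add_cancel hx₁⟩
  obtain ⟨xp, hxp⟩ : ∃ x : Fin n, (x : ℕ) = u.1 + 1 := ⟨⟨u.1 + 1, by omega⟩, rfl⟩
  obtain ⟨ym, hym⟩ : ∃ y : Fin n, (y : ℕ) + 1 = u.2 :=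
    ⟨⟨u.2 - 1, by omega⟩, Nat.sub_add_cancel hy₁⟩
  obtain ⟨yp, hyp⟩ : ∃ y : Fin n, (y : ℕ) = u.2 + 1 := ⟨⟨u.2 + 1, by omega⟩, rfl⟩
  have hsum := Finset.sum_le_sum fun v (_ : v ∈ Finset.univ) ↦ mul_le_mul_of_nonneg_left
    (sum_diagonal_half_pow_l1Dist_le hxm hxp hym hyp v) (Nat.cast_nonneg (α := ℝ) (D v))
  simp only [mul_add, mul_ite, mul_zero, Finset.sum_add_distrib, Finset.sum_ite_eq',
    Finset.mem_univ, if_true, mul_left_comm _ (25 / 4 : ℝ), ← Finset.mul_sum] at hsum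
  have := hD (xm, ym); have := hD (xm, yp); have := hD (xp, ym); have := hD (xp, yp)
  unfold weight at *
  linarith

lemma one_add_le_weight (D : Fin n × Fin n → ℕ) (hD : ∀ w, 1 ≤ weight D w)
    (u : Fin n × Fin n) :
    1 + (if IsInner 1 u then 12 / 25 else 0) * (D u : ℝ) ≤ weight D u := by
  split_ifs with hu
  · rcases Nat.eq_zero_or_pos (D u) with h | h
    · simpa [h] using hD u
    · have : (1 : ℝ) ≤ D u := by exact_mod_cast h
      linarith [weight_excess D hD hu]
  · simpa using hD u

lemma sum_weight_eq (D : Fin n × Fin n → ℕ) :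
    ∑ u, weight D u = ∑ v, (D v : ℝ) * ∑ u, (1 / 2 : ℝ) ^ l1Dist u v := by
  simp only [weight, Finset.mul_sum]
  exact Finset.sum_comm

lemma sq_le_mul_sum (D : Fin n × Fin n → ℕ) (hD : ∀ w, 1 ≤ weight D w) :
    (n : ℝ) ^ 2 ≤ 213 / 25 * ∑ v, (D v : ℝ) := by
  set c : Fin n × Fin n → ℝ := fun v ↦ if IsInner 1 v then 12 / 25 else 0
  have hlow : ∑ u, (1 + c u * D u) ≤ ∑ u, weight D u :=
    Finset.sum_le_sum fun u _ ↦ one_add_le_weight D hD u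
  have hup : ∑ u, weight D u ≤ ∑ v, (213 / 25 * (D v : ℝ) + c v * D v) := by
    rw [sum_weight_eq]
    refine Finset.sum_le_sum fun v _ ↦ ?_
    have hmass := sum_half_pow_l1Dist_le v
    have hDv : (0 : ℝ) ≤ D v := Nat.cast_nonneg _
    simp only [c]
    split_ifs at hmass ⊢ <;> nlinarith
  rw [Finset.sum_add_distrib, Finset.sum_const, Finset.card_univ, Fintype.card_prod,
    Fintype.card_fin] at hlow
  rw [Finset.sum_add_distrib, ← Finset.mul_sum] at hup
  norm_num at hlow
  linarith

lemma one_le_weight_of_subset_image (D : Fin n × Fin n → ℕ) (u : Fin n × Fin n)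
    (T : Finset (ℤ × ℤ))
    (hT : ∀ z ∈ T, ∃ v, 1 ≤ D v ∧ ((v.1 : ℤ) - u.1, (v.2 : ℤ) - u.2) = z)
    (h : 1 ≤ ∑ z ∈ T, (1 / 2 : ℝ) ^ (z.1.natAbs + z.2.natAbs)) : 1 ≤ weight D u := by
  classical
  set δ : Fin n × Fin n → ℤ × ℤ := fun v ↦ ((v.1 : ℤ) - u.1, (v.2 : ℤ) - u.2)
  set S := Finset.univ.filter fun v ↦ 1 ≤ D v
  have hδ : Set.InjOn δ S := fun v _ w _ h ↦ by
    simp only [δ, Prod.mk.injEq] at h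
    ext <;> omega
  have hsub : T ⊆ S.image δ := fun z hz ↦ by
    obtain ⟨v, hv, rfl⟩ := hT z hz
    exact Finset.mem_image_of_mem δ (by simpa [S] using hv)
  calc 1 ≤ ∑ z ∈ T, (1 / 2 : ℝ) ^ (z.1.natAbs + z.2.natAbs) := h
    _ ≤ ∑ z ∈ S.image δ, (1 / 2 : ℝ) ^ (z.1.natAbs + z.2.natAbs) :=
      Finset.sum_le_sum_of_subset_of_nonneg hsub fun _ _ _ ↦ by positivity
    _ = ∑ v ∈ S, (1 / 2 : ℝ) ^ l1Dist u v := by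
      rw [Finset.sum_image hδ]
      refine Finset.sum_congr rfl fun v _ ↦ ?_
      simp only [δ, l1Dist]
      congr 1
      omega
    _ ≤ ∑ v ∈ S, (D v : ℝ) * (1 / 2) ^ l1Dist u v := Finset.sum_le_sum fun v hv ↦ by
      have : (1 : ℝ) ≤ D v := by exact_mod_cast (Finset.mem_filter.1 hv).2
      nlinarith [pow_pos (by norm_num : (0 : ℝ) < 1 / 2) (l1Dist u v)]
    _ ≤ weight D u :=
      Finset.sum_le_sum_of_subset_of_nonneg (Finset.subset_univ _) fun _ _ _ ↦ by positivity

def IsLatticePoint (v : Fin n × Fin n) : Prop := (v.1.val + 2 * v.2.val) % 7 = 0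

instance (v : Fin n × Fin n) : Decidable (IsLatticePoint v) := by
  unfold IsLatticePoint; infer_instance

def latticePebbling (n : ℕ) (v : Fin n × Fin n) : ℕ :=
  if IsLatticePoint v ∨ ¬IsInner 5 v then 1 else 0

noncomputable def box : Finset (ℤ × ℤ) := Finset.Icc (-5) 5 ×ˢ Finset.Icc (-5) 5

-- The covering condition of `one_le_lattice_box_weight` scaled by `2 ^ 10`, stated in `ℕ` so
-- that the kernel can evaluate it.
lemma lattice_box_sum_ge (r : Fin 7) :
    1024 ≤ ∑ z ∈ box with ((r : ℤ) + z.1 + 2 * z.2) % 7 = 0,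
      2 ^ (10 - (z.1.natAbs + z.2.natAbs)) := by
  revert r
  decide

/-- Here `r` is the residue of `x + 2y` at a vertex `(x, y)`; the sum runs over the offsets from
it to the lattice points in the surrounding `11 × 11` box. -/
lemma one_le_lattice_box_weight (r : Fin 7) :
    1 ≤ ∑ z ∈ box with ((r : ℤ) + z.1 + 2 * z.2) % 7 = 0,
      (1 / 2 : ℝ) ^ (z.1.natAbs + z.2.natAbs) := by
  have hscale : ∀ z ∈ box.filter (fun z ↦ ((r : ℤ) + z.1 + 2 * z.2) % 7 = 0),
      (1 / 2 : ℝ) ^ (z.1.natAbs + z.2.natAbs) =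
        ((2 ^ (10 - (z.1.natAbs + z.2.natAbs)) : ℕ) : ℝ) / 2 ^ 10 := by
    intro z hz
    simp only [box, Finset.mem_filter, Finset.mem_product, Finset.mem_Icc] at hz
    obtain ⟨k, hk⟩ : ∃ k, 10 = z.1.natAbs + z.2.natAbs + k :=
      ⟨10 - (z.1.natAbs + z.2.natAbs), by omega⟩
    rw [hk, Nat.add_sub_cancel_left, Nat.cast_pow, Nat.cast_ofNat, pow_add (2 : ℝ), one_div_pow]
    field_simp
  rw [Finset.sum_congr rfl hscale, ← Finset.sum_div, ← Nat.cast_sum,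
    le_div_iff₀ (by norm_num)]
  exact_mod_cast lattice_box_sum_ge r

lemma fracCovers_latticePebbling (u : Fin n × Fin n) : 1 ≤ weight (latticePebbling n) u := by
  by_cases hu : IsInner 5 u
  · obtain ⟨hx₁, hx₂, hy₁, hy₂⟩ := hu
    refine one_le_weight_of_subset_image _ u _ (fun z hz ↦ ?_)
      (one_le_lattice_box_weight ⟨(u.1 + 2 * u.2) % 7, Nat.mod_lt _ (by norm_num)⟩)
    simp only [box, Finset.mem_filter, Finset.mem_product, Finset.mem_Icc] at hz
    push_cast at hz
    obtain ⟨a, ha⟩ : ∃ a : ℕ, (a : ℤ) = u.1 + z.1 :=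
      ⟨_, Int.toNat_of_nonneg (by omega)⟩
    obtain ⟨b, hb⟩ : ∃ b : ℕ, (b : ℤ) = u.2 + z.2 :=
      ⟨_, Int.toNat_of_nonneg (by omega)⟩
    refine ⟨(⟨a, by omega⟩, ⟨b, by omega⟩), (if_pos (Or.inl ?_)).ge, ?_⟩
    · dsimp only [IsLatticePoint]
      omega
    · ext <;> simp only <;> omega
  · have hpeb : latticePebbling n u = 1 := if_pos (Or.inr hu)
    calc (1 : ℝ) = latticePebbling n u * (1 / 2) ^ l1Dist u u := by simp [hpeb, l1Dist]
      _ ≤ weight (latticePebbling n) u :=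
        Finset.single_le_sum (f := fun v ↦ (latticePebbling n v : ℝ) * (1 / 2) ^ l1Dist u v)
          (fun _ _ ↦ by positivity) (Finset.mem_univ u)

lemma card_isLatticePoint_le :
    #{v : Fin n × Fin n | IsLatticePoint v} ≤ n * (n / 7 + 1) := by
  -- in each column the lattice points are `7` apart
  have h := Finset.card_le_card_of_injOn (fun v : Fin n × Fin n ↦ ((v.1 : ℕ), (v.2 : ℕ) / 7))
    (s := {v | IsLatticePoint v}) (t := Finset.range n ×ˢ Finset.range (n / 7 + 1))
    (fun v _ ↦ by
      simp only [Finset.coe_product, Finset.coe_range, Set.mem_prod, Set.mem_Iio]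
      omega)
    (fun v hv w hw h ↦ by
      rw [Finset.mem_coe, Finset.mem_filter_univ] at hv hw
      unfold IsLatticePoint at hv hw
      simp only [Prod.mk.injEq] at h
      ext <;> omega)
  simpa using h

lemma card_not_isInner_le (k : ℕ) : #{v : Fin n × Fin n | ¬IsInner k v} ≤ 4 * k * n := by
  classical
  set E : Finset (Fin n) := {x | (x : ℕ) < k ∨ n ≤ x + k}
  have hE : #E ≤ 2 * k := by
    have h := Finset.card_le_card_of_injOn (fun x : Fin n ↦ (x : ℕ)) (s := E)
      (t := Finset.range k ∪ Finset.Ico (n - k) n)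
      (fun x hx ↦ by simp [E] at hx ⊢; omega) (Fin.val_injective.injOn)
    have := Finset.card_union_le (Finset.range k) (Finset.Ico (n - k) n)
    simp only [Finset.card_range, Nat.card_Ico] at this
    omega
  have hsub : ({v | ¬IsInner k v} : Finset (Fin n × Fin n)) ⊆
      E ×ˢ Finset.univ ∪ Finset.univ ×ˢ E := by
    intro v hv
    rw [Finset.mem_filter_univ] at hv
    unfold IsInner at hv
    simp only [Finset.mem_union, Finset.mem_product, Finset.mem_univ, and_true, true_and, E,
      Finset.mem_filter]
    omega
  calc _ ≤ #(E ×ˢ Finset.univ ∪ Finset.univ ×ˢ E) := Finset.card_le_card hsub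
    _ ≤ #E * n + n * #E := by
      simpa only [Finset.card_product, Finset.card_univ, Fintype.card_fin] using
        Finset.card_union_le (E ×ˢ Finset.univ) (Finset.univ ×ˢ E)
    _ ≤ 4 * k * n := by nlinarith

lemma sum_latticePebbling_le :
    ∑ v, (latticePebbling n v : ℝ) ≤ n * (n + 147) / 7 := by
  have hcard : ∑ v, latticePebbling n v ≤ n * (n / 7 + 1) + 4 * 5 * n := by
    simp only [latticePebbling, Finset.sum_boole, Finset.filter_or]
    exact (Finset.card_union_le _ _).trans
      (add_le_add card_isLatticePoint_le (card_not_isInner_le 5))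
  have hdiv : ((n / 7 : ℕ) : ℝ) ≤ n / 7 := Nat.cast_div_le
  calc ∑ v, (latticePebbling n v : ℝ) = ((∑ v, latticePebbling n v : ℕ) : ℝ) := by
        push_cast; rfl
    _ ≤ ((n * (n / 7 + 1) + 4 * 5 * n : ℕ) : ℝ) := by exact_mod_cast hcard
    _ ≤ n * (n + 147) / 7 := by
      push_cast
      nlinarith [(Nat.cast_nonneg n : (0 : ℝ) ≤ n)]

lemma div_sum_le_of_fracCovers {D : Fin n × Fin n → ℕ} (hD : FracCovers n D) :
    (n : ℝ) ^ 2 / ∑ v, (D v : ℝ) ≤ 213 / 25 :=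
  div_le_of_le_mul₀ (Finset.sum_nonneg fun _ _ ↦ by positivity) (by norm_num)
    (sq_le_mul_sum D ((fracCovers_iff D).1 hD))

lemma ifcov_le (n : ℕ) : ifcov n ≤ 213 / 25 :=
  Real.sSup_le (by rintro r ⟨D, hD, rfl⟩; exact div_sum_le_of_fracCovers hD) (by norm_num)

lemma le_ifcov {n : ℕ} (hn : 0 < n) : 7 - 1029 / (n + 147) ≤ ifcov n := by
  have hcover : FracCovers n (latticePebbling n) :=
    (fracCovers_iff _).2 fracCovers_latticePebbling
  have hpos : 0 < ∑ v, (latticePebbling n v : ℝ) := by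
    have hcorner : latticePebbling n (⟨0, hn⟩, ⟨0, hn⟩) = 1 := if_pos (Or.inl rfl)
    exact lt_of_lt_of_le (by simp [hcorner])
      (Finset.single_le_sum (f := fun v ↦ (latticePebbling n v : ℝ)) (fun _ _ ↦ by positivity)
        (Finset.mem_univ (⟨0, hn⟩, ⟨0, hn⟩)))
  have hn' : (0 : ℝ) < n := by exact_mod_cast hn
  calc 7 - 1029 / ((n : ℝ) + 147) = (n : ℝ) ^ 2 / (n * (n + 147) / 7) := by
        field_simp; ring
    _ ≤ (n : ℝ) ^ 2 / ∑ v, (latticePebbling n v : ℝ) :=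
      div_le_div_of_nonneg_left (by positivity) hpos sum_latticePebbling_le
    _ ≤ ifcov n :=
      le_csSup ⟨213 / 25, by rintro r ⟨D, hD, rfl⟩; exact div_sum_le_of_fracCovers hD⟩
        ⟨_, hcover, rfl⟩

end GridCover

theorem ifcov_bounds (ε : ℝ) (hε : 0 < ε) :
    ∃ N : ℕ, ∀ n : ℕ, N ≤ n → 7 - ε ≤ ifcov n ∧ ifcov n ≤ 213 / 25 := by
  refine ⟨⌈1029 / ε⌉₊ + 1, fun n hn ↦ ⟨?_, GridCover.ifcov_le n⟩⟩
  have hN : 1029 / ε < n := Nat.lt_of_ceil_lt (by omega)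
  have hn : (0 : ℝ) < n := (div_pos (by norm_num) hε).trans hN
  have : 1029 / ((n : ℝ) + 147) ≤ ε := by
    rw [div_lt_iff₀ hε] at hN
    rw [div_le_iff₀ (by linarith)]
    nlinarith
  linarith [GridCover.le_ifcov (n := n) (by exact_mod_cast hn)]
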